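/- arXiv:2011.03360 — 3 statements merged into one kernel-verified Lean document; each statement's English description precedes it below -/
import Mathlib

section
/- Let H be a reproducing kernel Hilbert space on a set X with a normalized complete Pick kernel K, and let M be its multiplier algebra. Then for every y ∈ X the kernel function k_y = K(·, y) is a multiplier of H. -/
/-!
Write `K x z = ⟪k x, k z⟫` and let `F = 1 - K(·,p) K(p,·) / (K K(p,p))` be the positive
semidefinite kernel of the Pick condition. Then `(1 - F) K` is positive of rank one, and for each
`y` the Schur complement `F(y,y) F(x,z) - F(x,y) F(y,z)` is positive; by the Schur product theorem
`(F(y,y) - F(x,y) conj F(z,y)) K(x,z) ≥ 0`, so `F(·,y)` is a multiplier of norm at most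
`√F(y,y) < 1`. Hence `1 - F(·,y)` is invertible in the multiplier algebra, and
`k_y = K(p,y)/K(p,x₀) · (1 - F(·,x₀)) / (1 - F(·,y))` is a multiplier.
-/


open scoped ComplexOrder InnerProductSpace

/-- `h : X → ℂ` is a *multiplier* of the RKHS `H`, realized as a space of
functions on `X` via the evaluation map `ev`. -/
def IsMultiplier {X H : Type*} (ev : H → X → ℂ) (h : X → ℂ) : Prop :=
  ∀ f : H, ∃ g : H, ev g = fun x => h x * ev f x

/-- `f ∈ H` is *cyclic*: the set `{h·f : h a multiplier}` is dense in `H`. -/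
def IsCyclicVec {X H : Type*} [TopologicalSpace H] (ev : H → X → ℂ) (f : H) : Prop :=
  Dense {g : H | ∃ h : X → ℂ, IsMultiplier ev h ∧ ev g = fun x => h x * ev f x}

/-- A positive semi-definite function on `X × X`. -/
def IsPSDKernel {X : Type*} (F : X → X → ℂ) : Prop :=
  ∀ (n : ℕ) (x : Fin n → X), (Matrix.of fun i j : Fin n => F (x i) (x j)).PosSemidef

/-- `K` is a *complete Pick kernel*. -/
def IsCompletePick {X : Type*} (K : X → X → ℂ) : Prop :=
  (∀ x y, K x y ≠ 0) ∧
    ∃ x₀ : X, IsPSDKernel fun x y => 1 - K x x₀ * K x₀ y / (K x y * K x₀ x₀)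

open ComplexConjugate

open scoped MatrixOrder in
theorem Matrix.PosSemidef.exists_eq_gram {n : Type*} [Fintype n] {A : Matrix n n ℂ}
    (hA : A.PosSemidef) : ∃ v : n → EuclideanSpace ℂ n, A = Matrix.gram ℂ v := by
  classical
  obtain ⟨B, rfl⟩ := CStarAlgebra.nonneg_iff_eq_star_mul_self.mp hA.nonneg
  refine ⟨fun i => WithLp.toLp 2 fun m => B m i, ?_⟩
  ext i j
  simp [Matrix.gram, Matrix.mul_apply, EuclideanSpace.inner_eq_star_dotProduct, dotProduct,
    mul_comm]

theorem isPSDKernel_inner {X E : Type*} [NormedAddCommGroup E] [InnerProductSpace ℂ E]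
    (v : X → E) : IsPSDKernel fun x z => ⟪v x, v z⟫_ℂ :=
  fun _ x => Matrix.posSemidef_gram ℂ (v ∘ x)

namespace IsPSDKernel

variable {X : Type*} {F G : X → X → ℂ}

theorem apply_swap (hF : IsPSDKernel F) (x z : X) : F z x = conj (F x z) := by
  simpa using ((hF 2 ![x, z]).isHermitian.apply 1 0).symm

theorem diag_nonneg (hF : IsPSDKernel F) (x : X) : 0 ≤ F x x := by
  simpa using (hF 1 ![x]).diag_nonneg (i := 0)

theorem add (hF : IsPSDKernel F) (hG : IsPSDKernel G) : IsPSDKernel (F + G) :=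
  fun n x => (hF n x).add (hG n x)

theorem mul (hF : IsPSDKernel F) (hG : IsPSDKernel G) : IsPSDKernel (F * G) :=
  fun n x => (hF n x).hadamard (hG n x)

theorem const_mul (hF : IsPSDKernel F) {c : ℂ} (hc : 0 ≤ c) :
    IsPSDKernel fun x z => c * F x z :=
  fun n x => (hF n x).smul hc

theorem posSemidef (hF : IsPSDKernel F) : (Matrix.of F).PosSemidef := by
  refine ⟨Matrix.ext fun x z => by simp [hF.apply_swap x z], fun c => ?_⟩
  set e := c.support.equivFin
  have h := (hF _ fun m => (e.symm m : X)).dotProduct_mulVec_nonneg fun m => c (e.symm m)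
  simp only [dotProduct, Matrix.mulVec, Matrix.of_apply, Pi.star_apply, Finset.mul_sum] at h
  simp only [Finsupp.sum, ← Finset.sum_coe_sort c.support, ← e.symm.sum_comp, Matrix.of_apply]
  simpa only [mul_assoc] using h

theorem schurComplement (hF : IsPSDKernel F) (y : X) :
    IsPSDKernel fun x z => F y y * F x z - F x y * F y z := by
  -- with `F = ⟪v ·, v ·⟫` on the points `x i, y` and `b = v y`, the matrix is `⟪b, b⟫` times the
  -- Gram matrix of the components of the `v (x i)` orthogonal to `b`
  intro n x
  set x' : Fin (n + 1) → X := Fin.snoc x y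
  obtain ⟨v, hv⟩ := (hF (n + 1) x').exists_eq_gram
  have hFv (i j : Fin (n + 1)) : F (x' i) (x' j) = ⟪v i, v j⟫_ℂ := congr_fun₂ hv i j
  set b := v (Fin.last n)
  have hyy : F y y = ⟪b, b⟫_ℂ := by simpa [x'] using hFv (Fin.last n) (Fin.last n)
  suffices h : (Matrix.of fun i j => F y y * F (x i) (x j) - F (x i) y * F y (x j)) =
      F y y • Matrix.gram ℂ fun i : Fin n => v i.castSucc - (⟪b, v i.castSucc⟫_ℂ / ⟪b, b⟫_ℂ) • b by
    rw [h]; exact (Matrix.posSemidef_gram ℂ _).smul (hF.diag_nonneg y)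
  ext i j
  have hij : F (x i) (x j) = ⟪v i.castSucc, v j.castSucc⟫_ℂ := by
    simpa [x'] using hFv i.castSucc j.castSucc
  have hiy : F (x i) y = ⟪v i.castSucc, b⟫_ℂ := by simpa [x'] using hFv i.castSucc (Fin.last n)
  have hyj : F y (x j) = ⟪b, v j.castSucc⟫_ℂ := by simpa [x'] using hFv (Fin.last n) j.castSucc
  simp only [Matrix.of_apply, Matrix.smul_apply, Matrix.gram_apply, hij, hiy, hyj, hyy,
    inner_sub_left, inner_sub_right, inner_smul_left, inner_smul_right, map_div₀, inner_conj_symm,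
    smul_eq_mul]
  rcases eq_or_ne ⟪b, b⟫_ℂ 0 with hb | hb
  · simp [inner_self_eq_zero.mp hb]
  · field_simp
    ring

end IsPSDKernel

theorem LinearMap.exists_continuousLinearMap_of_norm_le {𝕜 V E F : Type*}
    [NontriviallyNormedField 𝕜] [AddCommGroup V] [Module 𝕜 V] [NormedAddCommGroup E]
    [NormedSpace 𝕜 E] [NormedAddCommGroup F] [NormedSpace 𝕜 F] [CompleteSpace F]
    {S : V →ₗ[𝕜] E} {T : V →ₗ[𝕜] F} (hS : DenseRange S) {r : ℝ} (hr : 0 ≤ r)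
    (hT : ∀ v, ‖T v‖ ≤ r * ‖S v‖) :
    ∃ A : E →L[𝕜] F, ‖A‖ ≤ r ∧ ∀ v, A (S v) = T v := by
  have hker : LinearMap.ker S ≤ LinearMap.ker T := fun v hv => by
    simpa [LinearMap.mem_ker.mp hv] using hT v
  let T₀ : LinearMap.range S →ₗ[𝕜] F :=
    ((LinearMap.ker S).liftQ T hker).comp S.quotKerEquivRange.symm.toLinearMap
  have hT₀ (v : V) : T₀ ⟨S v, S.mem_range_self v⟩ = T v := by
    simp only [T₀, LinearMap.comp_apply, LinearEquiv.coe_coe]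
    rw [LinearMap.quotKerEquivRange_symm_apply_image, Submodule.mkQ_apply, Submodule.liftQ_apply]
  have hT₀_le : ∀ w, ‖T₀ w‖ ≤ r * ‖w‖ := by
    rintro ⟨-, v, rfl⟩
    simpa [hT₀] using hT v
  let e := (LinearMap.range S).subtypeL
  have he : DenseRange e := by
    rw [DenseRange, Submodule.coe_subtypeL, Submodule.coe_subtype, Subtype.range_coe,
      LinearMap.coe_range]
    exact hS
  refine ⟨(T₀.mkContinuous r hT₀_le).extend e, ?_, fun v => ?_⟩
  · calc _ ≤ (1 : NNReal) * ‖T₀.mkContinuous r hT₀_le‖ :=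
          ContinuousLinearMap.opNorm_extend_le _ he fun w => by simp [e]
      _ ≤ r := by simpa using LinearMap.mkContinuous_norm_le _ hr _
  · exact (ContinuousLinearMap.extend_eq _ he isometry_subtype_coe.isUniformInducing
      ⟨S v, S.mem_range_self v⟩).trans (hT₀ v)

section Hilbert

variable {X H : Type*} [NormedAddCommGroup H] [InnerProductSpace ℂ H]

theorem denseRange_linearCombination_of_injective [CompleteSpace H] {ev : H → X → ℂ}
    (hev : Function.Injective ev)
    {k : X → H} (hk : ∀ (f : H) (x : X), ev f x = ⟪k x, f⟫_ℂ) :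
    DenseRange (Finsupp.linearCombination ℂ k) := by
  rw [DenseRange, ← LinearMap.coe_range, Finsupp.range_linearCombination,
    Submodule.dense_iff_topologicalClosure_eq_top, Submodule.topologicalClosure_eq_top_iff,
    Submodule.eq_bot_iff]
  intro f hf
  refine hev (funext fun x => ?_)
  rw [hk, hk, inner_zero_right]
  exact hf (k x) (Submodule.subset_span ⟨x, rfl⟩)

variable {k : X → H}

def IsMulOperator (k : X → H) (u : X → ℂ) (M : H →L[ℂ] H) : Prop :=
  ∀ x f, ⟪k x, M f⟫_ℂ = u x * ⟪k x, f⟫_ℂ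

namespace IsMulOperator

variable {u v : X → ℂ} {M N : H →L[ℂ] H}

theorem one_sub (hM : IsMulOperator k u M) : IsMulOperator k (1 - u) (1 - M) := fun x f => by
  simp [hM x f, sub_mul]

theorem mul (hM : IsMulOperator k u M) (hN : IsMulOperator k v N) :
    IsMulOperator k (u * v) (M * N) := fun x f => by
  simp [hM x, hN x f, mul_assoc]

theorem const_smul (hM : IsMulOperator k u M) (c : ℂ) : IsMulOperator k (c • u) (c • M) :=
  fun x f => by simp [hM x f, mul_assoc]

theorem units_inv {M : (H →L[ℂ] H)ˣ} (hM : IsMulOperator k u M) :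
    IsMulOperator k u⁻¹ ↑M⁻¹ := fun x f => by
  have h (g : H) : ⟪k x, g⟫_ℂ = u x * ⟪k x, (↑M⁻¹ : H →L[ℂ] H) g⟫_ℂ := by
    rw [← hM x, ← ContinuousLinearMap.comp_apply, ← ContinuousLinearMap.mul_def, Units.mul_inv,
      one_apply_eq_self]
  rcases eq_or_ne (u x) 0 with hu | hu
  · -- the junk value `0⁻¹ = 0` is harmless: `k x` is orthogonal to the range of `M`, i.e. to `H`
    have h₀ (g : H) : ⟪k x, g⟫_ℂ = 0 := by rw [h g, hu, zero_mul]
    rw [h₀, h₀, mul_zero]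
  · rw [h f, Pi.inv_apply, inv_mul_cancel_left₀ hu]

theorem isMultiplier (hM : IsMulOperator k u M) {ev : H → X → ℂ}
    (hk : ∀ (f : H) (x : X), ev f x = ⟪k x, f⟫_ℂ) : IsMultiplier ev u :=
  fun f => ⟨M f, funext fun x => by rw [hk, hk, hM]⟩

end IsMulOperator

theorem inner_linearCombination (k : X → H) (c d : X →₀ ℂ) :
    ⟪Finsupp.linearCombination ℂ k c, Finsupp.linearCombination ℂ k d⟫_ℂ =
      c.sum fun x a => d.sum fun z b => conj a * b * ⟪k x, k z⟫_ℂ := by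
  simp_rw [Finsupp.linearCombination_apply, Finsupp.sum_inner, inner_smul_left, Finsupp.inner_sum,
    inner_smul_right, Finsupp.mul_sum]
  exact Finsupp.sum_congr fun x _ => Finsupp.sum_congr fun z _ => by ring

theorem exists_isMulOperator_of_isPSDKernel [CompleteSpace H]
    (hk : DenseRange (Finsupp.linearCombination ℂ k)) {u : X → ℂ} {r : ℝ} (hr : 0 ≤ r)
    (hu : IsPSDKernel fun x z => ((r : ℂ) ^ 2 - u x * conj (u z)) * ⟪k x, k z⟫_ℂ) :
    ∃ M : H →L[ℂ] H, ‖M‖ ≤ r ∧ IsMulOperator k u M := by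
  -- `M` is the adjoint of `k x ↦ conj (u x) • k x`, which `hu` bounds on the span of the `k x`
  set S := Finsupp.linearCombination ℂ k
  set T := Finsupp.linearCombination ℂ fun x => conj (u x) • k x
  have hT : ∀ c, ‖T c‖ ≤ r * ‖S c‖ := by
    intro c
    have hQ : (r : ℂ) ^ 2 * ⟪S c, S c⟫_ℂ - ⟪T c, T c⟫_ℂ = c.sum fun x a => c.sum fun z b =>
        star a * Matrix.of (fun x z => ((r : ℂ) ^ 2 - u x * conj (u z)) * ⟪k x, k z⟫_ℂ) x z * b := by
      simp only [S, T, inner_linearCombination, inner_smul_left, inner_smul_right, Finsupp.mul_sum,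
        ← Finsupp.sum_sub, Matrix.of_apply]
      exact Finsupp.sum_congr fun x _ => Finsupp.sum_congr fun z _ => by simp; ring
    have h := (Complex.nonneg_iff.mp (hQ ▸ hu.posSemidef.2 c)).1
    rw [Complex.sub_re, ← Complex.ofReal_pow, Complex.re_ofReal_mul, ← RCLike.re_to_complex,
      ← RCLike.re_to_complex, inner_self_eq_norm_sq, inner_self_eq_norm_sq] at h
    rw [← sq_le_sq₀ (norm_nonneg _) (by positivity)]
    linarith
  obtain ⟨A, hA, hAS⟩ := LinearMap.exists_continuousLinearMap_of_norm_le hk hr hT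
  refine ⟨ContinuousLinearMap.adjoint A, by rwa [LinearIsometryEquiv.norm_map], fun x f => ?_⟩
  have hAk : A (k x) = conj (u x) • k x := by simpa [S, T] using hAS (Finsupp.single x 1)
  rw [ContinuousLinearMap.adjoint_inner_right, hAk, inner_smul_left, Complex.conj_conj]

end Hilbert

section Pick

variable {X H : Type*} [NormedAddCommGroup H] [InnerProductSpace ℂ H]

noncomputable def pickKernel (k : X → H) (p x z : X) : ℂ :=
  1 - ⟪k x, k p⟫_ℂ * ⟪k p, k z⟫_ℂ / (⟪k x, k z⟫_ℂ * ⟪k p, k p⟫_ℂ)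

variable {k : X → H} {p : X}

theorem one_sub_pickKernel_mul_inner {x z : X} (hxz : ⟪k x, k z⟫_ℂ ≠ 0) :
    (1 - pickKernel k p x z) * ⟪k x, k z⟫_ℂ = ⟪k x, k p⟫_ℂ * ⟪k p, k z⟫_ℂ / ⟪k p, k p⟫_ℂ := by
  rw [pickKernel, sub_sub_cancel]
  field_simp

theorem re_pickKernel_self_lt_one (hK : ∀ x z, ⟪k x, k z⟫_ℂ ≠ 0) (y : X) :
    (pickKernel k p y y).re < 1 := by
  have hky : k y ≠ 0 := fun h => hK y y (by simp [h])
  have hkp : k p ≠ 0 := fun h => hK p p (by simp [h])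
  have h : 1 - pickKernel k p y y =
      ((Complex.normSq ⟪k y, k p⟫_ℂ / (‖k y‖ ^ 2 * ‖k p‖ ^ 2) : ℝ) : ℂ) := by
    rw [pickKernel, sub_sub_cancel, ← inner_conj_symm (k p) (k y), Complex.mul_conj,
      inner_self_eq_norm_sq_to_K, inner_self_eq_norm_sq_to_K]
    push_cast
    rfl
  have hpos : 0 < Complex.normSq ⟪k y, k p⟫_ℂ / (‖k y‖ ^ 2 * ‖k p‖ ^ 2) := by
    have := Complex.normSq_pos.mpr (hK y p)
    positivity
  have := congrArg Complex.re h
  simp only [Complex.sub_re, Complex.one_re, Complex.ofReal_re] at this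
  linarith

theorem isPSDKernel_pickKernel_multiplier (hK : ∀ x z, ⟪k x, k z⟫_ℂ ≠ 0)
    (hF : IsPSDKernel (pickKernel k p)) (y : X) :
    IsPSDKernel fun x z =>
      (pickKernel k p y y - pickKernel k p x y * conj (pickKernel k p z y)) * ⟪k x, k z⟫_ℂ := by
  set F := pickKernel k p
  -- `(1 - F) K` is the Gram kernel of the projections of the `k x` onto the line through `k p`
  have hrank := (isPSDKernel_inner fun x => (⟪k p, k x⟫_ℂ / ⟪k p, k p⟫_ℂ) • k p).const_mul
    (hF.diag_nonneg y)
  convert ((hF.schurComplement y).mul (isPSDKernel_inner k)).add hrank using 1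
  funext x z
  have hproj : ⟪(⟪k p, k x⟫_ℂ / ⟪k p, k p⟫_ℂ) • k p, (⟪k p, k z⟫_ℂ / ⟪k p, k p⟫_ℂ) • k p⟫_ℂ =
      ⟪k x, k p⟫_ℂ * ⟪k p, k z⟫_ℂ / ⟪k p, k p⟫_ℂ := by
    simp only [inner_smul_left, inner_smul_right, map_div₀, inner_conj_symm]
    field_simp [hK p p]
  simp only [Pi.add_apply, Pi.mul_apply]
  rw [← hF.apply_swap z y, hproj, ← one_sub_pickKernel_mul_inner (hK x z)]
  ring

theorem exists_isMulOperator_pickKernel [CompleteSpace H]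
    (hk : DenseRange (Finsupp.linearCombination ℂ k)) (hK : ∀ x z, ⟪k x, k z⟫_ℂ ≠ 0)
    (hF : IsPSDKernel (pickKernel k p)) (y : X) :
    ∃ M : H →L[ℂ] H, ‖M‖ < 1 ∧ IsMulOperator k (pickKernel k p · y) M := by
  have hyy := hF.diag_nonneg y
  have hre : 0 ≤ (pickKernel k p y y).re := (Complex.nonneg_iff.mp hyy).1
  have hr : ((√(pickKernel k p y y).re : ℝ) : ℂ) ^ 2 = pickKernel k p y y := by
    rw [← Complex.ofReal_pow, Real.sq_sqrt hre,
      ← Complex.eq_re_of_ofReal_le (r := 0) (by simpa using hyy)]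
  have hu := isPSDKernel_pickKernel_multiplier hK hF y
  rw [← hr] at hu
  obtain ⟨M, hM, hMu⟩ := exists_isMulOperator_of_isPSDKernel hk (Real.sqrt_nonneg _) hu
  refine ⟨M, hM.trans_lt ?_, hMu⟩
  rw [Real.sqrt_lt' one_pos, one_pow]
  exact re_pickKernel_self_lt_one hK y

end Pick

/-- In an RKHS with a normalized complete Pick kernel, every kernel function
`k_y = K(·, y)` is a multiplier. -/
theorem stmt_4 {X H : Type*} [NormedAddCommGroup H] [InnerProductSpace ℂ H]
    [CompleteSpace H]
    (ev : H →ₗ[ℂ] (X → ℂ)) (hev : Function.Injective ev)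
    (k : X → H) (hk : ∀ (f : H) (x : X), ev f x = ⟪k x, f⟫_ℂ)
    (x₀ : X) (hnorm : ∀ x : X, ev (k x₀) x = 1)
    (hpick : IsCompletePick fun x y => ev (k y) x) :
    ∀ y : X, IsMultiplier (⇑ev) (ev (k y)) := by
  intro y
  have hK (x z : X) : ev (k z) x = ⟪k x, k z⟫_ℂ := hk (k z) x
  obtain ⟨hK0, p, hF⟩ := hpick
  simp only [hK] at hK0 hF hnorm
  have hdense := denseRange_linearCombination_of_injective hev hk
  obtain ⟨Mu, hMu_lt, hMu⟩ := exists_isMulOperator_pickKernel hdense hK0 hF y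
  obtain ⟨Mv, -, hMv⟩ := exists_isMulOperator_pickKernel hdense hK0 hF x₀
  have hMu_inv := IsMulOperator.units_inv (M := Units.oneSub Mu hMu_lt) hMu.one_sub
  have hW := (hMv.one_sub.mul hMu_inv).const_smul (⟪k p, k y⟫_ℂ / ⟪k p, k x₀⟫_ℂ)
  convert hW.isMultiplier hk using 1
  funext x
  simp only [hK, Pi.smul_apply, Pi.mul_apply, Pi.sub_apply, Pi.one_apply, Pi.inv_apply, smul_eq_mul,
    pickKernel, sub_sub_cancel, hnorm]
  field_simp [hK0]
  exact (div_self (hK0 p p)).symm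
end

section
/- Let H be the Hilbert space of holomorphic functions f(z₁,z₂) = Σ_{j,k≥0} a_{jk} z₁ʲ z₂ᵏ on ℂ × 𝔻 (where 𝔻 is the open unit disk) with ‖f‖² := Σ_{j,k≥0} j!·|a_{jk}|² < ∞. Then H is a reproducing kernel Hilbert space on ℂ × 𝔻 with reproducing kernel K((z₁,z₂),(w₁,w₂)) = e^{z₁·conj(w₁)}/(1 − z₂·conj(w₂)), which is normalized at (0,0) and nowhere zero; moreover every multiplier of H is a bounded holomorphic function on ℂ × 𝔻 that is independent of the first variable, and consequently H contains no cyclic functions. -/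
open scoped ComplexOrder InnerProductSpace

noncomputable section

/-- The set `ℂ × 𝔻`. -/
abbrev Stmt11.X : Type := {q : ℂ × ℂ // ‖q.2‖ < 1}

/-- The Hilbert space `H` of power series `f(z₁,z₂) = Σ a_{jk} z₁ʲ z₂ᵏ` with
`Σ j!·|a_{jk}|² < ∞`, realized as a weighted `ℓ²` space: an element `b` of
`lp _ 2` corresponds to the coefficients `a_{jk} = b_{jk}/√(j!)`, so that
`‖b‖² = Σ j!·|a_{jk}|²`. -/
abbrev Stmt11.H : Type := lp (fun _ : ℕ × ℕ => ℂ) 2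

/-- Evaluation of an element of `H` at a point of `ℂ × 𝔻`:
`ev b (z₁,z₂) = Σ_{j,k} (b_{jk}/√(j!)) z₁ʲ z₂ᵏ`. -/
def Stmt11.ev (b : Stmt11.H) (p : Stmt11.X) : ℂ :=
  ∑' jk : ℕ × ℕ,
    (b jk / (Real.sqrt (Nat.factorial jk.1) : ℂ)) * p.1.1 ^ jk.1 * p.1.2 ^ jk.2

/-- The point `(0,0) ∈ ℂ × 𝔻`. -/
def Stmt11.x₀ : Stmt11.X := ⟨(0, 0), by simp⟩

/-!
The coefficients `b_{jk}` of an element of `ℓ²(ℕ × ℕ)` pair against the kernel vector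
`k_w = (conj (w₁ʲ / √j! · w₂ᵏ))_{jk}`, which is square-summable since
`Σ |w₁|^{2j}/j! · |w₂|^{2k} = exp |w₁|² / (1 - |w₂|²)`; this gives absolute convergence, the
reproducing property, and the kernel as a product of the exponential and geometric series.
Elements of `H` are holomorphic because the double power series converges absolutely on
`ℂ × 𝔻`, and determined by their values by uniqueness of power series coefficients.

A multiplier `h` acts by an operator `T` with closed graph, hence bounded, and
`h(w) ‖k_w‖² = ⟪k_w, T k_w⟫` gives `|h| ≤ ‖T‖`. As `h = T 1 ∈ H` is holomorphic, Liouville's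
theorem in the first variable shows that `h` only depends on `z₂`. If `f` were cyclic, the
closed condition `f(q) g(p) = f(p) g(q)` for `p, q` with equal second coordinates would hold for
all `g ∈ H`; testing it with `g = z₁` and `g = 1` forces `f = 0`, which is not cyclic.
-/

section

open Metric Filter Topology
open scoped Nat

theorem natCast_mul_pow_pred_mul_le {x ε : ℝ} (hx : 0 ≤ x) (hε : 0 ≤ ε) (n : ℕ) :
    n * x ^ (n - 1) * ε ≤ (x + ε) ^ n := by
  induction n with
  | zero => simp
  | succ n ih =>
    have hpow : x ^ n ≤ (x + ε) ^ n := pow_le_pow_left₀ hx (by linarith) n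
    have hxn : n * x ^ (n - 1) * x = n * x ^ n := by
      rcases n with _ | n
      · simp
      · rw [Nat.add_sub_cancel, mul_assoc, ← pow_succ]
    calc ((n + 1 : ℕ) : ℝ) * x ^ n * ε = n * x ^ (n - 1) * ε * x + x ^ n * ε := by
          push_cast; linear_combination -ε * hxn
      _ ≤ (x + ε) ^ n * x + (x + ε) ^ n * ε := by gcongr
      _ = (x + ε) ^ (n + 1) := by ring

theorem natCast_mul_pow_pred_mul_pow_le {x y R r ε : ℝ} (hx : 0 ≤ x) (hxR : x ≤ R) (hy : 0 ≤ y)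
    (hyr : y ≤ r) (hε : 0 < ε) (j k : ℕ) :
    j * x ^ (j - 1) * y ^ k ≤ (R + ε) ^ j * (r + ε) ^ k / ε := by
  rw [le_div_iff₀ hε, mul_right_comm]
  have hj : j * x ^ (j - 1) * ε ≤ (R + ε) ^ j :=
    (mul_le_mul_of_nonneg_right (by gcongr) hε.le).trans
      (natCast_mul_pow_pred_mul_le (hx.trans hxR) hε.le j)
  have hk : y ^ k ≤ (r + ε) ^ k := pow_le_pow_left₀ hy (by linarith) k
  exact mul_le_mul hj hk (pow_nonneg hy k) (pow_nonneg (by linarith) j)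

theorem hasFDerivAt_mul_pow_mul_pow {𝕜 : Type*} [NontriviallyNormedField 𝕜] (a : 𝕜) (j k : ℕ)
    (q : 𝕜 × 𝕜) :
    HasFDerivAt (fun q : 𝕜 × 𝕜 => a * q.1 ^ j * q.2 ^ k)
      ((a * (j * q.1 ^ (j - 1)) * q.2 ^ k) • ContinuousLinearMap.fst 𝕜 𝕜 𝕜 +
        (a * q.1 ^ j * (k * q.2 ^ (k - 1))) • ContinuousLinearMap.snd 𝕜 𝕜 𝕜) q := by
  have h1 := (hasDerivAt_pow j q.1).comp_hasFDerivAt q (hasFDerivAt_fst (𝕜 := 𝕜) (p := q))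
  have h2 := (hasDerivAt_pow k q.2).comp_hasFDerivAt q (hasFDerivAt_snd (𝕜 := 𝕜) (p := q))
  refine ((h1.const_mul a).mul h2).congr_fderiv ?_
  ext <;> simp
  ring

theorem norm_smul_fst_add_smul_snd_le {𝕜 : Type*} [NontriviallyNormedField 𝕜] (c d : 𝕜) :
    ‖c • ContinuousLinearMap.fst 𝕜 𝕜 𝕜 + d • ContinuousLinearMap.snd 𝕜 𝕜 𝕜‖ ≤ ‖c‖ + ‖d‖ := by
  refine ContinuousLinearMap.opNorm_le_bound _ (by positivity) fun v => ?_
  calc ‖c * v.1 + d * v.2‖ ≤ ‖c‖ * ‖v.1‖ + ‖d‖ * ‖v.2‖ := by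
        simpa only [norm_mul] using norm_add_le (c * v.1) (d * v.2)
    _ ≤ (‖c‖ + ‖d‖) * ‖v‖ := by
        nlinarith [norm_fst_le v, norm_snd_le v, norm_nonneg c, norm_nonneg d]

theorem differentiableOn_tsum_mul_pow_mul_pow {a : ℕ × ℕ → ℂ}
    (ha : ∀ q : ℂ × ℂ, ‖q.2‖ < 1 → Summable fun jk : ℕ × ℕ => ‖a jk * q.1 ^ jk.1 * q.2 ^ jk.2‖) :
    DifferentiableOn ℂ (fun q : ℂ × ℂ => ∑' jk : ℕ × ℕ, a jk * q.1 ^ jk.1 * q.2 ^ jk.2)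
      {q : ℂ × ℂ | ‖q.2‖ < 1} := by
  intro p hp
  change ‖p.2‖ < 1 at hp
  set ε := (1 - ‖p.2‖) / 3 with hε_def
  have hε : 0 < ε := by linarith
  set R := ‖p.1‖ + ε
  set r := ‖p.2‖ + ε
  set s := ball (0 : ℂ) R ×ˢ ball (0 : ℂ) r
  have hps : p ∈ s := ⟨by simp [R, hε], by simp [r, hε]⟩
  -- the derivatives are dominated by the terms of the series at the corner `(R + ε, r + ε)`
  have hbound : ∀ (jk : ℕ × ℕ) (q : ℂ × ℂ), q ∈ s →
      ‖(a jk * (jk.1 * q.1 ^ (jk.1 - 1)) * q.2 ^ jk.2) • ContinuousLinearMap.fst ℂ ℂ ℂ +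
        (a jk * q.1 ^ jk.1 * (jk.2 * q.2 ^ (jk.2 - 1))) • ContinuousLinearMap.snd ℂ ℂ ℂ‖ ≤
      2 / ε * ‖a jk * ((R + ε : ℝ) : ℂ) ^ jk.1 * ((r + ε : ℝ) : ℂ) ^ jk.2‖ := by
    rintro ⟨j, k⟩ q ⟨hq1, hq2⟩
    rw [mem_ball_zero_iff] at hq1 hq2
    have h1 := natCast_mul_pow_pred_mul_pow_le (norm_nonneg q.1) hq1.le (norm_nonneg q.2) hq2.le
      hε j k
    have h2 := natCast_mul_pow_pred_mul_pow_le (norm_nonneg q.2) hq2.le (norm_nonneg q.1) hq1.le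
      hε k j
    have hR : 0 ≤ R + ε := by positivity
    have hr : 0 ≤ r + ε := by positivity
    refine (norm_smul_fst_add_smul_snd_le _ _).trans ?_
    simp only [norm_mul, norm_pow, Complex.norm_natCast, Complex.norm_real, Real.norm_eq_abs,
      abs_of_nonneg hR, abs_of_nonneg hr]
    have ha0 := norm_nonneg (a (j, k))
    calc ‖a (j, k)‖ * (j * ‖q.1‖ ^ (j - 1)) * ‖q.2‖ ^ k +
          ‖a (j, k)‖ * ‖q.1‖ ^ j * (k * ‖q.2‖ ^ (k - 1))
        = ‖a (j, k)‖ * (j * ‖q.1‖ ^ (j - 1) * ‖q.2‖ ^ k + k * ‖q.2‖ ^ (k - 1) * ‖q.1‖ ^ j) := by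
          ring
      _ ≤ ‖a (j, k)‖ * ((R + ε) ^ j * (r + ε) ^ k / ε + (r + ε) ^ k * (R + ε) ^ j / ε) := by
          gcongr
      _ = 2 / ε * (‖a (j, k)‖ * (R + ε) ^ j * (r + ε) ^ k) := by ring
  have hcorner : ‖((r + ε : ℝ) : ℂ)‖ < 1 := by
    rw [Complex.norm_real, Real.norm_of_nonneg (by positivity)]
    linarith
  have hu := (ha (((R + ε : ℝ) : ℂ), ((r + ε : ℝ) : ℂ)) hcorner).mul_left (2 / ε)
  have hs : IsOpen s := isOpen_ball.prod isOpen_ball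
  have hs' : IsPreconnected s := ((convex_ball _ _).prod (convex_ball _ _)).isPreconnected
  exact (hasFDerivAt_tsum_of_isPreconnected hu hs hs'
    (fun jk q _ => hasFDerivAt_mul_pow_mul_pow (a jk) jk.1 jk.2 q) hbound hps (ha p hp).of_norm
    hps).differentiableAt.differentiableWithinAt

theorem eq_zero_of_tsum_mul_pow_eq_zero {c : ℕ → ℂ} {M : ℝ} (hc : ∀ n, ‖c n‖ ≤ M)
    (h : ∀ z : ℂ, ‖z‖ < 1 → ∑' n, c n * z ^ n = 0) : c = 0 := by
  set P := FormalMultilinearSeries.ofScalars ℂ c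
  have hrad : 1 ≤ P.radius :=
    P.le_radius_of_bound M fun n => by simpa [P, FormalMultilinearSeries.ofScalars_norm] using hc n
  have hP : HasFPowerSeriesAt P.sum P 0 :=
    (P.hasFPowerSeriesOnBall (zero_lt_one.trans_le hrad)).hasFPowerSeriesAt
  have hsum : P.sum =ᶠ[𝓝 0] 0 := by
    filter_upwards [ball_mem_nhds (0 : ℂ) one_pos] with z hz
    simpa [P, FormalMultilinearSeries.sum, FormalMultilinearSeries.ofScalars_apply_eq,
      mul_comm] using h z (mem_ball_zero_iff.1 hz)
  exact (FormalMultilinearSeries.ofScalars_series_eq_zero ℂ).1 (hP.eq_zero_of_eventually hsum)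

theorem eq_zero_of_tsum_mul_pow_mul_pow_eq_zero {a : ℕ × ℕ → ℂ} {M : ℝ} (ha : ∀ jk, ‖a jk‖ ≤ M)
    (h : ∀ z w : ℂ, ‖z‖ < 1 → ‖w‖ < 1 → ∑' jk, a jk * z ^ jk.1 * w ^ jk.2 = 0) : a = 0 := by
  have hrow : ∀ w : ℂ, ‖w‖ < 1 → ∀ j, ∑' k, a (j, k) * w ^ k = 0 := by
    intro w hw
    have hgeom := (hasSum_geometric_of_lt_one (norm_nonneg w) hw).mul_left M
    refine congrFun (eq_zero_of_tsum_mul_pow_eq_zero (M := M * (1 - ‖w‖)⁻¹) (fun j => ?_)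
      fun z hz => ?_)
    · refine tsum_of_norm_bounded hgeom fun k => ?_
      rw [norm_mul, norm_pow]
      exact mul_le_mul_of_nonneg_right (ha _) (by positivity)
    · have hprod : Summable fun jk : ℕ × ℕ => M * (‖z‖ ^ jk.1 * ‖w‖ ^ jk.2) :=
        ((summable_geometric_of_lt_one (norm_nonneg z) hz).mul_of_nonneg
          (summable_geometric_of_lt_one (norm_nonneg w) hw) (fun _ => by positivity)
          fun _ => by positivity).mul_left M
      have hs : Summable fun jk : ℕ × ℕ => a jk * z ^ jk.1 * w ^ jk.2 := by
        refine hprod.of_norm_bounded fun jk => ?_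
        rw [norm_mul, norm_mul, norm_pow, norm_pow, mul_assoc]
        exact mul_le_mul_of_nonneg_right (ha _) (by positivity)
      rw [← h z w hz hw, hs.tsum_prod]
      refine tsum_congr fun j => ?_
      rw [← tsum_mul_right]
      exact tsum_congr fun k => by ring
  ext ⟨j, k⟩
  exact congrFun (eq_zero_of_tsum_mul_pow_eq_zero (fun k => ha (j, k)) fun w hw => hrow w hw j) k

theorem tsum_pow_div_factorial_mul_pow (x y : ℂ) (hy : ‖y‖ < 1) :
    ∑' jk : ℕ × ℕ, x ^ jk.1 / jk.1 ! * y ^ jk.2 = Complex.exp x / (1 - y) := by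
  have hx : Summable fun j : ℕ => ‖x ^ j / (j ! : ℂ)‖ := by
    simpa [norm_div, norm_pow] using Real.summable_pow_div_factorial ‖x‖
  have hy' : Summable fun k : ℕ => ‖y ^ k‖ := by
    simpa [norm_pow] using summable_geometric_of_lt_one (norm_nonneg y) hy
  rw [← tsum_mul_tsum_of_summable_norm hx hy', tsum_geometric_of_norm_lt_one hy,
    Complex.exp_eq_exp_ℂ, NormedSpace.exp_eq_tsum_div, div_eq_mul_inv]

end

section Multiplier

variable {X E : Type*} [NormedAddCommGroup E] [InnerProductSpace ℂ E] {k : X → E} {h : X → ℂ}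

theorem IsMultiplier.exists_continuousLinearMap [CompleteSpace E]
    (hk : Function.Injective fun (f : E) x => ⟪k x, f⟫_ℂ)
    (hh : IsMultiplier (fun (f : E) x => ⟪k x, f⟫_ℂ) h) :
    ∃ T : E →L[ℂ] E, ∀ f x, ⟪k x, T f⟫_ℂ = h x * ⟪k x, f⟫_ℂ := by
  choose T hT using hh
  have hT' : ∀ f x, ⟪k x, T f⟫_ℂ = h x * ⟪k x, f⟫_ℂ := fun f x => congrFun (hT f) x
  let L : E →ₗ[ℂ] E :=
    { toFun := T
      map_add' := fun f g => hk <| funext fun x => by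
        simp only [hT', inner_add_right]; ring
      map_smul' := fun c f => hk <| funext fun x => by
        simp only [hT', inner_smul_right, RingHom.id_apply]; ring }
  -- closed graph theorem: `⟪k x, ·⟫` is continuous, so limits pass through `hT'`
  refine ⟨⟨L, L.continuous_of_seq_closed_graph fun u f g hu hTu => hk <| funext fun x => ?_⟩, hT'⟩
  change ⟪k x, g⟫_ℂ = ⟪k x, T f⟫_ℂ
  rw [hT']
  exact tendsto_nhds_unique ((tendsto_const_nhds.inner hTu).congr fun n => hT' (u n) x)
    ((tendsto_const_nhds.inner hu).const_mul (h x))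

theorem norm_le_opNorm_of_inner_apply_eq_mul {T : E →L[ℂ] E} {x : X}
    (hT : ∀ f, ⟪k x, T f⟫_ℂ = h x * ⟪k x, f⟫_ℂ) (hx : k x ≠ 0) : ‖h x‖ ≤ ‖T‖ := by
  have hpos : 0 < ‖k x‖ ^ 2 := by positivity
  refine le_of_mul_le_mul_right ?_ hpos
  calc ‖h x‖ * ‖k x‖ ^ 2 = ‖⟪k x, T (k x)⟫_ℂ‖ := by
        rw [hT, inner_self_eq_norm_sq_to_K, norm_mul, norm_pow, RCLike.norm_ofReal, abs_norm]
    _ ≤ ‖k x‖ * (‖T‖ * ‖k x‖) := (norm_inner_le_norm _ _).trans (by gcongr; exact T.le_opNorm _)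
    _ = ‖T‖ * ‖k x‖ ^ 2 := by ring

end Multiplier

section Cyclic

variable {X E : Type*} [TopologicalSpace E] {ev : E → X → ℂ} {f : E}

theorem IsCyclicVec.mem_of_isClosed (hf : IsCyclicVec ev f) {S : Set E} (hS : IsClosed S)
    (hmul : ∀ g h, IsMultiplier ev h → (ev g = fun x => h x * ev f x) → g ∈ S) (g : E) :
    g ∈ S :=
  hS.closure_subset_iff.2 (by rintro _ ⟨h, hh, hg⟩; exact hmul _ h hh hg) (hf g)

theorem IsCyclicVec.apply_ne_zero (hf : IsCyclicVec ev f) {x : X}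
    (hx : Continuous fun g => ev g x) {g : E} (hg : ev g x ≠ 0) : ev f x ≠ 0 := fun hfx =>
  hg <| hf.mem_of_isClosed (isClosed_eq hx continuous_const)
    (fun _ h _ hgh => by simp [hgh, hfx]) g

theorem IsCyclicVec.apply_mul_apply_eq (hf : IsCyclicVec ev f) {p q : X}
    (hp : Continuous fun g => ev g p) (hq : Continuous fun g => ev g q)
    (hpq : ∀ h, IsMultiplier ev h → h p = h q) (g : E) :
    ev f q * ev g p = ev f p * ev g q :=
  hf.mem_of_isClosed (isClosed_eq (hp.const_mul _) (hq.const_mul _))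
    (fun _ h hh hgh => by simp only [Set.mem_ofPred_eq, hgh, hpq h hh]; ring) g

end Cyclic

namespace Stmt11

open scoped Nat

theorem one_le_sqrt_factorial (j : ℕ) : 1 ≤ Real.sqrt j ! :=
  Real.one_le_sqrt.2 (by exact_mod_cast j.factorial_pos)

theorem norm_coeff_le (b : H) (jk : ℕ × ℕ) : ‖b jk / (Real.sqrt jk.1 ! : ℂ)‖ ≤ ‖b‖ := by
  rw [norm_div, Complex.norm_real, Real.norm_of_nonneg (Real.sqrt_nonneg _)]
  exact (div_le_self (norm_nonneg _) (one_le_sqrt_factorial _)).trans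
    (lp.norm_apply_le_norm two_ne_zero b jk)

def kernelCoeff (p : X) (jk : ℕ × ℕ) : ℂ :=
  starRingEnd ℂ (p.1.1 ^ jk.1 / (Real.sqrt jk.1 ! : ℂ) * p.1.2 ^ jk.2)

theorem norm_kernelCoeff (p : X) (jk : ℕ × ℕ) :
    ‖kernelCoeff p jk‖ = ‖p.1.1‖ ^ jk.1 / Real.sqrt jk.1 ! * ‖p.1.2‖ ^ jk.2 := by
  simp [kernelCoeff, Real.norm_of_nonneg (Real.sqrt_nonneg _)]

theorem memℓp_kernelCoeff (p : X) : Memℓp (kernelCoeff p) 2 := by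
  have hp : ‖p.1.2‖ ^ 2 < 1 := by nlinarith [p.2, norm_nonneg p.1.2]
  refine memℓp_gen (((Real.summable_pow_div_factorial (‖p.1.1‖ ^ 2)).mul_of_nonneg
    (summable_geometric_of_lt_one (by positivity) hp) (fun _ => by positivity)
    fun _ => by positivity).congr fun jk => ?_)
  rw [norm_kernelCoeff, ENNReal.toReal_ofNat, Real.rpow_two, mul_pow, div_pow,
    Real.sq_sqrt (Nat.cast_nonneg _)]
  ring

def kernelVec (p : X) : H := ⟨kernelCoeff p, memℓp_kernelCoeff p⟩

theorem summable_norm_term (b : H) (p : X) :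
    Summable fun jk : ℕ × ℕ =>
      ‖(b jk / (Real.sqrt jk.1 ! : ℂ)) * p.1.1 ^ jk.1 * p.1.2 ^ jk.2‖ := by
  have hpq : (2 : ENNReal).toReal.HolderConjugate (2 : ENNReal).toReal := by
    rw [Real.holderConjugate_iff]; norm_num
  refine (lp.summable_mul hpq b (kernelVec p)).congr fun jk => ?_
  change ‖b jk‖ * ‖kernelCoeff p jk‖ = _
  rw [norm_kernelCoeff]
  simp [Real.norm_of_nonneg (Real.sqrt_nonneg _)]
  ring

theorem ev_eq_inner (b : H) (p : X) : ev b p = ⟪kernelVec p, b⟫_ℂ := by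
  rw [lp.inner_eq_tsum]
  refine tsum_congr fun jk => ?_
  rw [RCLike.inner_apply]
  change _ = b jk * starRingEnd ℂ (kernelCoeff p jk)
  rw [kernelCoeff, Complex.conj_conj]
  ring

theorem ev_kernelVec (p q : X) :
    ev (kernelVec q) p = Complex.exp (p.1.1 * starRingEnd ℂ q.1.1) /
      (1 - p.1.2 * starRingEnd ℂ q.1.2) := by
  have hq : ‖p.1.2 * starRingEnd ℂ q.1.2‖ < 1 := by
    rw [norm_mul, Complex.norm_conj]
    nlinarith [p.2, q.2, norm_nonneg p.1.2, norm_nonneg q.1.2]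
  rw [← tsum_pow_div_factorial_mul_pow _ _ hq]
  refine tsum_congr fun jk => ?_
  change starRingEnd ℂ (q.1.1 ^ jk.1 / (Real.sqrt jk.1 ! : ℂ) * q.1.2 ^ jk.2) /
    (Real.sqrt jk.1 ! : ℂ) * p.1.1 ^ jk.1 * p.1.2 ^ jk.2 = _
  have hsq : (Real.sqrt jk.1 ! : ℂ) * (Real.sqrt jk.1 ! : ℂ) = jk.1 ! := by
    rw [← Complex.ofReal_mul, Real.mul_self_sqrt (Nat.cast_nonneg _), Complex.ofReal_natCast]
  have hne : (Real.sqrt jk.1 ! : ℂ) ≠ 0 := by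
    exact_mod_cast (Real.sqrt_pos.2 (by exact_mod_cast jk.1.factorial_pos)).ne'
  simp only [map_mul, map_div₀, map_pow, Complex.conj_ofReal]
  rw [← hsq]
  field_simp
  ring

theorem ev_kernelVec_ne_zero (p q : X) : ev (kernelVec q) p ≠ 0 := by
  rw [ev_kernelVec]
  refine div_ne_zero (Complex.exp_ne_zero _) (sub_ne_zero.2 fun h => ?_)
  have := congrArg norm h
  rw [norm_one, norm_mul, Complex.norm_conj] at this
  nlinarith [p.2, q.2, norm_nonneg p.1.2, norm_nonneg q.1.2]

theorem ev_kernelVec_x₀ (p : X) : ev (kernelVec x₀) p = 1 := by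
  simp [ev_kernelVec, x₀]

theorem ev_injective : Function.Injective ev := by
  intro b c hbc
  have hzero : ∀ p, ev (b - c) p = 0 := fun p => by
    rw [ev_eq_inner, inner_sub_right, ← ev_eq_inner, ← ev_eq_inner, hbc, sub_self]
  have hcoeff := eq_zero_of_tsum_mul_pow_mul_pow_eq_zero (norm_coeff_le (b - c))
    fun z w _ hw => hzero ⟨(z, w), hw⟩
  refine sub_eq_zero.1 (lp.ext (funext fun jk => ?_))
  simpa [(Real.sqrt_pos.2 (Nat.cast_pos.2 jk.1.factorial_pos)).ne'] using congrFun hcoeff jk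

def evExt (b : H) (q : ℂ × ℂ) : ℂ :=
  ∑' jk : ℕ × ℕ, (b jk / (Real.sqrt jk.1 ! : ℂ)) * q.1 ^ jk.1 * q.2 ^ jk.2

theorem differentiableOn_evExt (b : H) : DifferentiableOn ℂ (evExt b) {q : ℂ × ℂ | ‖q.2‖ < 1} :=
  differentiableOn_tsum_mul_pow_mul_pow fun q hq => summable_norm_term b ⟨q, hq⟩

theorem ev_single (m : ℕ × ℕ) (a : ℂ) (p : X) :
    ev (lp.single 2 m a) p = a / (Real.sqrt m.1 ! : ℂ) * p.1.1 ^ m.1 * p.1.2 ^ m.2 := by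
  rw [ev, tsum_eq_single m fun n hn => by simp [Pi.single_eq_of_ne hn], lp.single_apply_self]

theorem ev_single_zero_zero (p : X) : ev (lp.single 2 (0, 0) 1) p = 1 := by
  simp [ev_single]

theorem ev_single_one_zero (p : X) : ev (lp.single 2 (1, 0) 1) p = p.1.1 := by
  simp [ev_single]

theorem continuous_ev_apply (p : X) : Continuous fun b : H => ev b p := by
  simp only [ev_eq_inner]
  exact continuous_const.inner continuous_id

section Multiplier

variable {h : X → ℂ}

theorem exists_ev_eq_of_isMultiplier (hh : IsMultiplier ev h) : ∃ g : H, ev g = h := by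
  obtain ⟨g, hg⟩ := hh (lp.single 2 (0, 0) 1)
  exact ⟨g, by simpa [ev_single_zero_zero] using hg⟩

theorem exists_bound_of_isMultiplier (hh : IsMultiplier ev h) : ∃ C : ℝ, ∀ p : X, ‖h p‖ ≤ C := by
  have hev : ev = fun b p => ⟪kernelVec p, b⟫_ℂ := funext₂ ev_eq_inner
  rw [hev] at hh
  obtain ⟨T, hT⟩ := hh.exists_continuousLinearMap (hev ▸ ev_injective)
  refine ⟨‖T‖, fun p => norm_le_opNorm_of_inner_apply_eq_mul (fun f => hT f p) fun h0 => ?_⟩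
  exact ev_kernelVec_ne_zero p p (by rw [h0, ev_eq_inner, inner_zero_right])

theorem apply_eq_of_isMultiplier_of_snd_eq (hh : IsMultiplier ev h) {p q : X}
    (hpq : p.1.2 = q.1.2) : h p = h q := by
  -- Liouville's theorem on the slice `ℂ × {p.1.2}`, where `h = ev g` is bounded and entire
  obtain ⟨g, rfl⟩ := exists_ev_eq_of_isMultiplier hh
  obtain ⟨C, hC⟩ := exists_bound_of_isMultiplier hh
  have hw : ‖p.1.2‖ < 1 := p.2
  have hdiff : Differentiable ℂ (evExt g ∘ fun z => (z, p.1.2)) := fun z =>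
    ((differentiableOn_evExt g).differentiableAt
      ((isOpen_lt continuous_snd.norm continuous_const).mem_nhds (x := (z, p.1.2)) hw)).comp z
      (differentiableAt_id.prodMk (differentiableAt_const _))
  have hbdd : Bornology.IsBounded (Set.range (evExt g ∘ fun z => (z, p.1.2))) :=
    isBounded_iff_forall_norm_le.2 ⟨C, by rintro _ ⟨z, rfl⟩; exact hC ⟨(z, p.1.2), hw⟩⟩
  have hq : q = ⟨(q.1.1, p.1.2), hw⟩ := Subtype.ext (Prod.ext rfl hpq.symm)
  rw [hq]
  exact hdiff.apply_eq_apply_of_bounded hbdd p.1.1 q.1.1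

end Multiplier

theorem not_isCyclicVec (b : H) : ¬ IsCyclicVec ev b := by
  intro hb
  have hfib : ∀ p q : X, p.1.2 = q.1.2 → ∀ g, ev b q * ev g p = ev b p * ev g q :=
    fun p q hpq => hb.apply_mul_apply_eq (continuous_ev_apply p) (continuous_ev_apply q)
      fun _ hh => apply_eq_of_isMultiplier_of_snd_eq hh hpq
  -- `g = z₁` makes `b` vanish on `{0} × 𝔻`, and then `g = 1` makes it vanish everywhere
  have hzero : ∀ p : X, ev b p = 0 := by
    intro p
    have h0 : ev b ⟨(0, p.1.2), p.2⟩ = 0 := by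
      simpa [ev_single_one_zero] using
        hfib ⟨(1, p.1.2), p.2⟩ ⟨(0, p.1.2), p.2⟩ rfl (lp.single 2 (1, 0) 1)
    simpa [ev_single_zero_zero, h0, eq_comm] using
      hfib p ⟨(0, p.1.2), p.2⟩ rfl (lp.single 2 (0, 0) 1)
  exact hb.apply_ne_zero (continuous_ev_apply x₀) (g := lp.single 2 (0, 0) 1)
    (by simp [ev_single_zero_zero]) (hzero x₀)

end Stmt11

open Stmt11 in
/-- The Hilbert space of power series `f(z₁,z₂) = Σ a_{jk} z₁ʲ z₂ᵏ` on `ℂ × 𝔻` with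
`‖f‖² = Σ j!·|a_{jk}|² < ∞` is an RKHS on `ℂ × 𝔻` whose elements are holomorphic,
with reproducing kernel `K((z₁,z₂),(w₁,w₂)) = exp(z₁·conj w₁)/(1 - z₂·conj w₂)`,
normalized at `(0,0)` and nowhere zero; every multiplier of `H` is a bounded
holomorphic function on `ℂ × 𝔻` independent of the first variable, and `H` has no
cyclic functions. -/
theorem stmt_11 :
    -- the defining power series converges absolutely on `ℂ × 𝔻`
    (∀ (b : H) (p : X), Summable fun jk : ℕ × ℕ =>
      ‖(b jk / (Real.sqrt (Nat.factorial jk.1) : ℂ)) * p.1.1 ^ jk.1 * p.1.2 ^ jk.2‖) ∧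
    -- `H` is a space of functions on `ℂ × 𝔻`
    (Function.Injective fun b : H => ev b) ∧
    -- every element of `H` is holomorphic on `ℂ × 𝔻`
    (∀ b : H, ∃ F : ℂ × ℂ → ℂ,
      DifferentiableOn ℂ F {q : ℂ × ℂ | ‖q.2‖ < 1} ∧
      ∀ p : X, F p.1 = ev b p) ∧
    -- `H` is an RKHS with kernel `exp(z₁·conj w₁)/(1 - z₂·conj w₂)`,
    -- normalized at `(0,0)` and nowhere zero
    (∃ k : X → H,
      (∀ (b : H) (p : X), ev b p = ⟪k p, b⟫_ℂ) ∧
      (∀ p q : X, ev (k q) p =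
        Complex.exp (p.1.1 * (starRingEnd ℂ) q.1.1) /
          (1 - p.1.2 * (starRingEnd ℂ) q.1.2)) ∧
      (∀ p : X, ev (k x₀) p = 1) ∧
      (∀ p q : X, ev (k q) p ≠ 0)) ∧
    -- every multiplier is bounded, holomorphic, and independent of the first variable
    (∀ h : X → ℂ, IsMultiplier ev h →
      (∃ C : ℝ, ∀ p : X, ‖h p‖ ≤ C) ∧
      (∃ F : ℂ × ℂ → ℂ,
        DifferentiableOn ℂ F {q : ℂ × ℂ | ‖q.2‖ < 1} ∧
        ∀ p : X, F p.1 = h p) ∧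
      (∀ p q : X, p.1.2 = q.1.2 → h p = h q)) ∧
    -- `H` contains no cyclic functions
    (∀ b : H, ¬ IsCyclicVec ev b) := by
  refine ⟨summable_norm_term, ev_injective,
    fun b => ⟨evExt b, differentiableOn_evExt b, fun _ => rfl⟩,
    ⟨kernelVec, ev_eq_inner, ev_kernelVec, ev_kernelVec_x₀, ev_kernelVec_ne_zero⟩,
    fun h hh => ⟨exists_bound_of_isMultiplier hh, ?_,
      fun _ _ => apply_eq_of_isMultiplier_of_snd_eq hh⟩,
    not_isCyclicVec⟩
  obtain ⟨g, rfl⟩ := exists_ev_eq_of_isMultiplier hh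
  exact ⟨evExt g, differentiableOn_evExt g, fun _ => rfl⟩

end
end

section
/- There exist a sequence (a_n)_{n≥0} of strictly positive real numbers satisfying: (a) a₀ = 1; (b) a_n ≤ a_{n+1} for all n ≥ 0; (c) inf_{n≥0} a_n/a_{n+1} = 0; and (d) lim_{n→∞} a_n^{1/n} = 1. In fact, the sequence defined by a_n := k! whenever k² ≤ n < (k+1)² has all four properties. -/
/-!
The sequence `a n = (⌊√n⌋)!` is constant on the blocks `k² ≤ n < (k+1)²` and jumps by the
factor `k + 1` from the last index of a block to the first of the next, so the ratios
`a n / a (n+1)` come arbitrarily close to `0`. On the other hand `log a n ≤ k log k ≤ n (log k)/k`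
with `k = ⌊√n⌋`, so `log a n = o(n)` and `a n ^ (1/n) → 1`.
-/

open Filter Real Topology
open scoped Nat

theorem Nat.tendsto_sqrt_atTop : Tendsto Nat.sqrt atTop atTop :=
  tendsto_atTop_atTop.2 fun k => ⟨k ^ 2, fun _ hn => Nat.le_sqrt'.2 hn⟩

theorem Real.log_factorial_le_mul_log (k : ℕ) : log (k ! : ℝ) ≤ k * log k := by
  calc log (k ! : ℝ) ≤ log ((k : ℝ) ^ k) :=
        log_le_log (by positivity) (by exact_mod_cast Nat.factorial_le_pow k)
    _ = k * log k := log_pow k k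

theorem Real.log_factorial_div_sq_le (k : ℕ) : log (k ! : ℝ) / (k : ℝ) ^ 2 ≤ log k / k := by
  rcases Nat.eq_zero_or_pos k with rfl | hk
  · simp
  · have hk' : (0 : ℝ) < k := by exact_mod_cast hk
    calc log (k ! : ℝ) / (k : ℝ) ^ 2 ≤ k * log k / (k : ℝ) ^ 2 := by
          gcongr; exact log_factorial_le_mul_log k
      _ = log k / k := by field_simp

theorem tendsto_rpow_one_div_of_tendsto_log_div {a : ℕ → ℝ} (ha : ∀ n, 0 < a n)
    (h : Tendsto (fun n : ℕ => log (a n) / n) atTop (𝓝 0)) :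
    Tendsto (fun n : ℕ => a n ^ (1 / (n : ℝ))) atTop (𝓝 1) := by
  have hexp := (continuous_exp.tendsto 0).comp h
  rw [exp_zero] at hexp
  refine hexp.congr fun n => ?_
  simp only [Function.comp_apply, rpow_def_of_pos (ha n), div_eq_mul_one_div (log (a n))]

noncomputable def factorialSqrt (n : ℕ) : ℝ := (Nat.sqrt n)!

namespace factorialSqrt

theorem eq_factorial {n k : ℕ} (hk : k ^ 2 ≤ n) (hn : n < (k + 1) ^ 2) :
    factorialSqrt n = k ! := by
  rw [factorialSqrt, ← Nat.eq_sqrt'.2 ⟨hk, hn⟩]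

theorem one_le (n : ℕ) : 1 ≤ factorialSqrt n := by
  unfold factorialSqrt
  exact_mod_cast (Nat.sqrt n).factorial_pos

theorem pos (n : ℕ) : 0 < factorialSqrt n :=
  one_pos.trans_le (one_le n)

theorem zero : factorialSqrt 0 = 1 := by
  simp [factorialSqrt]

theorem monotone : Monotone factorialSqrt := fun _ _ h => by
  unfold factorialSqrt
  exact_mod_cast Nat.factorial_le (Nat.sqrt_le_sqrt h)

theorem div_succ_at_block_end (k : ℕ) :
    factorialSqrt (k ^ 2 + 2 * k) / factorialSqrt (k ^ 2 + 2 * k + 1) = 1 / (k + 1) := by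
  have hsucc : k ^ 2 + 2 * k + 1 = (k + 1) ^ 2 := by ring
  rw [factorialSqrt, factorialSqrt, hsucc, Nat.sqrt_add_eq' k (by omega), Nat.sqrt_eq',
    Nat.factorial_succ]
  push_cast
  field_simp

theorem iInf_div_succ : ⨅ n : ℕ, factorialSqrt n / factorialSqrt (n + 1) = 0 := by
  refine ciInf_eq_of_forall_ge_of_forall_gt_exists_lt
    (fun n => (div_pos (pos n) (pos (n + 1))).le) fun ε hε => ?_
  obtain ⟨k, hk⟩ := exists_nat_one_div_lt hε
  exact ⟨k ^ 2 + 2 * k, by rwa [div_succ_at_block_end]⟩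

theorem tendsto_log_div : Tendsto (fun n : ℕ => log (factorialSqrt n) / n) atTop (𝓝 0) := by
  have hlog : Tendsto (fun k : ℕ => log k / k) atTop (𝓝 0) :=
    isLittleO_log_id_atTop.tendsto_div_nhds_zero.comp tendsto_natCast_atTop_atTop
  refine tendsto_of_tendsto_of_tendsto_of_le_of_le' tendsto_const_nhds
    (hlog.comp Nat.tendsto_sqrt_atTop) (Eventually.of_forall fun n => ?_) ?_
  · exact div_nonneg (log_nonneg (one_le n)) n.cast_nonneg
  · filter_upwards [eventually_ge_atTop 1] with n hn
    calc log (factorialSqrt n) / n ≤ log (factorialSqrt n) / (Nat.sqrt n : ℝ) ^ 2 := by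
          gcongr
          · exact log_nonneg (one_le n)
          · exact_mod_cast Nat.sqrt_le' n
      _ ≤ log (Nat.sqrt n) / Nat.sqrt n := log_factorial_div_sq_le _

end factorialSqrt

/-- There is a sequence `(a_n)` of strictly positive reals with (a) `a₀ = 1`,
(b) `a_n ≤ a_{n+1}`, (c) `inf_n a_n/a_{n+1} = 0`, and (d) `a_n^{1/n} → 1`; in fact
the sequence defined by `a_n = k!` whenever `k² ≤ n < (k+1)²` has all four
properties. -/
theorem stmt_15 :
    ∃ a : ℕ → ℝ,
      (∀ n k : ℕ, k ^ 2 ≤ n → n < (k + 1) ^ 2 → a n = Nat.factorial k) ∧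
      (∀ n, 0 < a n) ∧
      a 0 = 1 ∧
      (∀ n, a n ≤ a (n + 1)) ∧
      (⨅ n : ℕ, a n / a (n + 1)) = 0 ∧
      Filter.Tendsto (fun n : ℕ => a n ^ (1 / (n : ℝ))) Filter.atTop (nhds 1) :=
  ⟨factorialSqrt, fun _ _ => factorialSqrt.eq_factorial, factorialSqrt.pos, factorialSqrt.zero,
    fun n => factorialSqrt.monotone n.le_succ, factorialSqrt.iInf_div_succ,
    tendsto_rpow_one_div_of_tendsto_log_div factorialSqrt.pos factorialSqrt.tendsto_log_div⟩
end
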